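/- For every n ≥ 1, the convex hull of the n×n diagonally and antidiagonally symmetric ASMs in ℝ^{n×n} equals P_ASM ∩ P_DAS, i.e., conv(DASASM(n)) = conv(ASM(n)) ∩ {X ∈ ℝ^{n×n} : x_{i,j} = x_{j,i} and x_{i,j} = x_{n+1−j,n+1−i} for all i,j}; moreover, for every n ≥ 1 the dimension of conv(DASASM(n)) equals ⌊n²/4⌋. -/

import Mathlib

/-- An `n × n` alternating sign matrix: entries in `{-1, 0, 1}`, all row- and
column-prefix sums lie in `{0, 1}`, and all full row and column sums equal `1`. -/
def IsASM (n : ℕ) (X : Fin n → Fin n → ℝ) : Prop :=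
  (∀ i j, X i j = -1 ∨ X i j = 0 ∨ X i j = 1) ∧
  (∀ i j, (∑ j' ∈ Finset.Iic j, X i j') = 0 ∨ (∑ j' ∈ Finset.Iic j, X i j') = 1) ∧
  (∀ i j, (∑ i' ∈ Finset.Iic i, X i' j) = 0 ∨ (∑ i' ∈ Finset.Iic i, X i' j) = 1) ∧
  (∀ i, (∑ j, X i j) = 1) ∧
  (∀ j, (∑ i, X i j) = 1)

open Finset

namespace DASASMAux

variable {n : ℕ}

def ext (n : ℕ) (X : Fin n → Fin n → ℝ) (i j : ℕ) : ℝ :=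
  if h : i < n ∧ j < n then X ⟨i, h.1⟩ ⟨j, h.2⟩ else 0

def sf (n : ℕ) (X : Fin n → Fin n → ℝ) (a b : ℕ) : ℝ :=
  ∑ i ∈ range a, ∑ j ∈ range b, ext n X i j


lemma ext_apply (X : Fin n → Fin n → ℝ) (i j : Fin n) : ext n X i j = X i j := by
  simp [ext, i.isLt, j.isLt]

lemma ext_apply' (X : Fin n → Fin n → ℝ) {i j : ℕ} (hi : i < n) (hj : j < n) :
    ext n X i j = X ⟨i, hi⟩ ⟨j, hj⟩ := by simp [ext, hi, hj]

/-- Conversion of `Iic`-sums over `Fin n` into `range`-sums of the extension. -/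
lemma sum_Iic_eq_range (X : Fin n → Fin n → ℝ) (i : Fin n) (j : Fin n) :
    ∑ j' ∈ Finset.Iic j, X i j' = ∑ k ∈ range (j.val + 1), ext n X i k := by
  refine Finset.sum_nbij' (fun a => (a : ℕ)) (fun a => ⟨a % n, Nat.mod_lt _ i.pos⟩) ?_ ?_ ?_ ?_ ?_
  · intro a ha; simp only [Finset.mem_Iic] at ha
    simp only [Finset.mem_range]; omega
  · intro a ha; simp only [Finset.mem_range] at ha
    have han : a < n := lt_of_lt_of_le ha j.2
    simp only [Finset.mem_Iic, Fin.le_def]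
    simp [Nat.mod_eq_of_lt han]; omega
  · intro a ha; exact Fin.ext (by simp [Nat.mod_eq_of_lt a.isLt])
  · intro a ha; simp only [Finset.mem_range] at ha
    have han : a < n := lt_of_lt_of_le ha j.2
    simp [Nat.mod_eq_of_lt han]
  · intro a ha; simp only [Finset.mem_Iic] at ha
    rw [ext_apply]

lemma sum_univ_eq_range (X : Fin n → Fin n → ℝ) (i : Fin n) :
    ∑ j, X i j = ∑ k ∈ range n, ext n X i k := by
  rw [← Fin.sum_univ_eq_sum_range (fun k => ext n X i k) n]
  exact Finset.sum_congr rfl fun j _ => (ext_apply X i j).symm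

lemma sf_zero_left (X : Fin n → Fin n → ℝ) (b : ℕ) : sf n X 0 b = 0 := by simp [sf]

lemma sf_zero_right (X : Fin n → Fin n → ℝ) (a : ℕ) : sf n X a 0 = 0 := by simp [sf]

lemma sf_succ_left (X : Fin n → Fin n → ℝ) (a b : ℕ) :
    sf n X (a + 1) b = sf n X a b + ∑ j ∈ range b, ext n X a j := by
  simp [sf, Finset.sum_range_succ]

lemma sf_succ_right (X : Fin n → Fin n → ℝ) (a b : ℕ) :
    sf n X a (b + 1) = sf n X a b + ∑ i ∈ range a, ext n X i b := by
  simp [sf, Finset.sum_range_succ, Finset.sum_add_distrib]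

/-- Row partial sums as differences of corner sums. -/
lemma sf_row_diff (X : Fin n → Fin n → ℝ) (a b : ℕ) :
    sf n X (a + 1) b - sf n X a b = ∑ j ∈ range b, ext n X a j := by
  rw [sf_succ_left]; ring

lemma sf_comm (X : Fin n → Fin n → ℝ) (hs : ∀ i j, X i j = X j i) (a b : ℕ) :
    sf n X a b = sf n X b a := by
  rw [sf, sf, Finset.sum_comm]
  refine Finset.sum_congr rfl fun i _ => Finset.sum_congr rfl fun j _ => ?_
  unfold ext
  by_cases h : j < n ∧ i < n
  · simp [h, h.1, h.2, And.comm]; rw [hs]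
  · rw [dif_neg h, dif_neg (by tauto)]


def Cset (n : ℕ) : Set (Fin n → Fin n → ℝ) :=
  {X | (∀ i j, 0 ≤ ∑ j' ∈ Finset.Iic j, X i j' ∧ ∑ j' ∈ Finset.Iic j, X i j' ≤ 1) ∧
    ∀ i, ∑ j, X i j = 1}

def Lset (n : ℕ) : Set (Fin n → Fin n → ℝ) :=
  {X | ∀ i j, X i j = X j i ∧ X i j = X j.rev i.rev}

def Qset (n : ℕ) : Set (Fin n → Fin n → ℝ) := Cset n ∩ Lset n

section QFacts

variable {X : Fin n → Fin n → ℝ} (hX : X ∈ Qset n)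

lemma ext_anti (hX : X ∈ Qset n) {i j : ℕ} (hi : i < n) (hj : j < n) :
    ext n X i j = ext n X (n - 1 - j) (n - 1 - i) := by
  have h1 : n - 1 - j < n := by omega
  have h2 : n - 1 - i < n := by omega
  rw [ext_apply' X hi hj, ext_apply' X h1 h2]
  have := (hX.2 ⟨i, hi⟩ ⟨j, hj⟩).2
  rw [this]
  congr 1 <;> exact Fin.ext (by simp [Fin.rev]; omega)

lemma rps_total (hX : X ∈ Qset n) {a : ℕ} (ha : a < n) :
    ∑ j ∈ range n, ext n X a j = 1 := by
  rw [← sum_univ_eq_range X ⟨a, ha⟩]; exact hX.1.2 ⟨a, ha⟩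

lemma rps_bounds (hX : X ∈ Qset n) {a b : ℕ} (ha : a < n) (hb : b ≤ n) :
    0 ≤ ∑ j ∈ range b, ext n X a j ∧ ∑ j ∈ range b, ext n X a j ≤ 1 := by
  rcases Nat.eq_zero_or_pos b with rfl | hbpos
  · simp
  · have hb1 : b - 1 < n := by omega
    have hval : (⟨b - 1, hb1⟩ : Fin n).val + 1 = b := by simp; omega
    have : ∑ j' ∈ Finset.Iic (⟨b - 1, hb1⟩ : Fin n), X ⟨a, ha⟩ j' = ∑ j ∈ range b, ext n X a j := by
      rw [sum_Iic_eq_range, hval]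
    rw [← this]
    exact hX.1.1 ⟨a, ha⟩ ⟨b - 1, hb1⟩

lemma sf_top (hX : X ∈ Qset n) {a : ℕ} (ha : a ≤ n) : sf n X a n = a := by
  induction a with
  | zero => simp [sf_zero_left]
  | succ a ih =>
    rw [sf_succ_left, ih (by omega), rps_total hX (by omega)]
    push_cast; ring

lemma sf_right (hX : X ∈ Qset n) {b : ℕ} (hb : b ≤ n) : sf n X n b = b := by
  rw [sf_comm X (fun i j => (hX.2 i j).1)]
  exact sf_top hX hb

lemma sf_anti (hX : X ∈ Qset n) {a b : ℕ} (ha : a ≤ n) (hb : b ≤ n) :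
    sf n X a b = (a : ℝ) + b - n + sf n X (n - b) (n - a) := by
  have key : sf n X a b
      = ∑ p ∈ Finset.Ico (n - b) n ×ˢ Finset.Ico (n - a) n, ext n X p.1 p.2 := by
    rw [sf, ← Finset.sum_product']
    refine Finset.sum_nbij' (fun p => (n - 1 - p.2, n - 1 - p.1))
      (fun p => (n - 1 - p.2, n - 1 - p.1)) ?_ ?_ ?_ ?_ ?_
    · intro p hp
      simp only [Finset.mem_product, Finset.mem_range] at hp
      simp only [Finset.mem_product, Finset.mem_Ico]
      omega
    · intro p hp
      simp only [Finset.mem_product, Finset.mem_Ico] at hp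
      simp only [Finset.mem_product, Finset.mem_range]
      omega
    · intro p hp
      simp only [Finset.mem_product, Finset.mem_range] at hp
      have : n - 1 - (n - 1 - p.1) = p.1 := by omega
      have h2 : n - 1 - (n - 1 - p.2) = p.2 := by omega
      simp [this, h2]
    · intro p hp
      simp only [Finset.mem_product, Finset.mem_Ico] at hp
      have : n - 1 - (n - 1 - p.1) = p.1 := by omega
      have h2 : n - 1 - (n - 1 - p.2) = p.2 := by omega
      simp [this, h2]
    · intro p hp
      simp only [Finset.mem_product, Finset.mem_range] at hp
      exact ext_anti hX (by omega) (by omega)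
  rw [key, Finset.sum_product]
  have inner : ∀ p ∈ Finset.Ico (n - b) n,
      ∑ q ∈ Finset.Ico (n - a) n, ext n X p q
        = (∑ q ∈ range n, ext n X p q) - ∑ q ∈ range (n - a), ext n X p q :=
    fun p _ => Finset.sum_Ico_eq_sub _ (by omega)
  rw [Finset.sum_congr rfl inner, Finset.sum_sub_distrib,
    Finset.sum_Ico_eq_sub _ (show n - b ≤ n by omega),
    Finset.sum_Ico_eq_sub _ (show n - b ≤ n by omega)]
  have e1 : ∑ p ∈ range n, ∑ q ∈ range n, ext n X p q = sf n X n n := rfl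
  have e2 : ∑ p ∈ range (n - b), ∑ q ∈ range n, ext n X p q = sf n X (n - b) n := rfl
  have e3 : ∑ p ∈ range n, ∑ q ∈ range (n - a), ext n X p q = sf n X n (n - a) := rfl
  have e4 : ∑ p ∈ range (n - b), ∑ q ∈ range (n - a), ext n X p q = sf n X (n - b) (n - a) := rfl
  rw [e1, e2, e3, e4, sf_top hX le_rfl, sf_top hX (by omega : n - b ≤ n),
    sf_right hX (by omega : n - a ≤ n)]
  have cb : ((n - b : ℕ) : ℝ) = (n : ℝ) - b := by
    have : b ≤ n := hb; push_cast [this]; ring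
  have ca : ((n - a : ℕ) : ℝ) = (n : ℝ) - a := by push_cast [ha]; ring
  rw [cb, ca]; ring

end QFacts

section Chi

open Classical in
/-- Indicator of the level set of the fractional part of the corner sums. -/
noncomputable def chi (n : ℕ) (X : Fin n → Fin n → ℝ) (α : ℝ) (a b : ℕ) : ℝ :=
  if Int.fract (sf n X a b) = α then 1 else 0

variable {X : Fin n → Fin n → ℝ} {α : ℝ}

lemma chi_mem (a b : ℕ) : chi n X α a b = 0 ∨ chi n X α a b = 1 := by
  unfold chi; split <;> simp

lemma chi_eq_chi {a b c d : ℕ} (h : Int.fract (sf n X a b) = Int.fract (sf n X c d)) :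
    chi n X α a b = chi n X α c d := by
  unfold chi; rw [h]

lemma fract_eq_of_sub_int {x y : ℝ} (k : ℤ) (h : x = y + k) : Int.fract x = Int.fract y := by
  rw [h, Int.fract_add_intCast]

lemma chi_left0 (hα : α ≠ 0) (b : ℕ) : chi n X α 0 b = 0 := by
  unfold chi
  rw [sf_zero_left, Int.fract_zero, if_neg (Ne.symm hα)]

lemma chi_bot (hα : α ≠ 0) (a : ℕ) : chi n X α a 0 = 0 := by
  unfold chi
  rw [sf_zero_right, Int.fract_zero, if_neg (Ne.symm hα)]

lemma chi_top (hX : X ∈ Qset n) (hα : α ≠ 0) {a : ℕ} (ha : a ≤ n) : chi n X α a n = 0 := by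
  unfold chi
  rw [sf_top hX ha, Int.fract_natCast, if_neg (Ne.symm hα)]

lemma chi_rightn (hX : X ∈ Qset n) (hα : α ≠ 0) {b : ℕ} (hb : b ≤ n) : chi n X α n b = 0 := by
  unfold chi
  rw [sf_right hX hb, Int.fract_natCast, if_neg (Ne.symm hα)]

lemma chi_symm (hX : X ∈ Qset n) (a b : ℕ) : chi n X α a b = chi n X α b a :=
  chi_eq_chi (by rw [sf_comm X (fun i j => (hX.2 i j).1)])

lemma chi_anti (hX : X ∈ Qset n) {a b : ℕ} (ha : a ≤ n) (hb : b ≤ n) :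
    chi n X α a b = chi n X α (n - b) (n - a) := by
  refine chi_eq_chi (fract_eq_of_sub_int ((a : ℤ) + b - n) ?_)
  rw [sf_anti hX ha hb]; push_cast; ring

/-- The symmetric perturbation matrix. -/
noncomputable def pert (n : ℕ) (X : Fin n → Fin n → ℝ) (α : ℝ) : Fin n → Fin n → ℝ :=
  fun i j => chi n X α (i + 1) (j + 1) - chi n X α i (j + 1)
    - chi n X α (i + 1) j + chi n X α i j

lemma pert_apply (i j : Fin n) : pert n X α i j
    = chi n X α (i.val + 1) (j.val + 1) - chi n X α i.val (j.val + 1)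
      - chi n X α (i.val + 1) j.val + chi n X α i.val j.val := rfl

lemma pert_range_sum (hα : α ≠ 0) {a : ℕ} (ha : a < n) {b : ℕ} (hb : b ≤ n) :
    ∑ k ∈ range b, ext n (pert n X α) a k
      = chi n X α (a + 1) b - chi n X α a b := by
  have : ∀ k ∈ range b, ext n (pert n X α) a k
      = (fun m => chi n X α (a + 1) m - chi n X α a m) (k + 1)
        - (fun m => chi n X α (a + 1) m - chi n X α a m) k := by
    intro k hk
    have hkn : k < n := lt_of_lt_of_le (mem_range.1 hk) hb
    rw [ext_apply' _ ha hkn, pert_apply]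
    simp only; ring
  rw [Finset.sum_congr rfl this]
  refine (Finset.sum_range_sub (fun m => chi n X α (a + 1) m - chi n X α a m) b).trans ?_
  rw [chi_bot hα, chi_bot hα]; ring

lemma pert_row_prefix (hα : α ≠ 0) (i j : Fin n) :
    ∑ j' ∈ Finset.Iic j, pert n X α i j'
      = chi n X α (i.val + 1) (j.val + 1) - chi n X α i.val (j.val + 1) := by
  rw [sum_Iic_eq_range, pert_range_sum hα i.isLt (by omega)]

lemma pert_row_total (hX : X ∈ Qset n) (hα : α ≠ 0) (i : Fin n) :
    ∑ j, pert n X α i j = 0 := by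
  rw [sum_univ_eq_range, pert_range_sum hα i.isLt le_rfl,
    chi_top hX hα (by omega), chi_top hX hα (by omega), sub_self]

lemma pert_symm1 (hX : X ∈ Qset n) (i j : Fin n) : pert n X α i j = pert n X α j i := by
  rw [pert_apply, pert_apply,
    chi_symm (α := α) hX (i.val + 1) (j.val + 1),
    chi_symm (α := α) hX i.val (j.val + 1),
    chi_symm (α := α) hX (i.val + 1) j.val,
    chi_symm (α := α) hX i.val j.val]
  ring

lemma pert_symm2 (hX : X ∈ Qset n) (i j : Fin n) :
    pert n X α i j = pert n X α j.rev i.rev := by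
  have hi := i.isLt; have hj := j.isLt
  have hrev : ∀ k : Fin n, (k.rev : ℕ) = n - 1 - k.val := by
    intro k; simp [Fin.rev]; omega
  rw [pert_apply, pert_apply, hrev, hrev]
  have e1 : n - 1 - j.val + 1 = n - j.val := by omega
  have e2 : n - 1 - i.val + 1 = n - i.val := by omega
  rw [e1, e2]
  have c1 : chi n X α (i.val + 1) (j.val + 1) = chi n X α (n - (j.val + 1)) (n - (i.val + 1)) :=
    chi_anti hX (by omega) (by omega)
  have c2 : chi n X α i.val (j.val + 1) = chi n X α (n - (j.val + 1)) (n - i.val) :=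
    chi_anti hX (by omega) (by omega)
  have c3 : chi n X α (i.val + 1) j.val = chi n X α (n - j.val) (n - (i.val + 1)) :=
    chi_anti hX (by omega) (by omega)
  have c4 : chi n X α i.val j.val = chi n X α (n - j.val) (n - i.val) :=
    chi_anti hX (by omega) (by omega)
  have e3 : n - (j.val + 1) = n - 1 - j.val := by omega
  have e4 : n - (i.val + 1) = n - 1 - i.val := by omega
  rw [c1, c2, c3, c4, e3, e4]
  ring

lemma sf_pert (hX : X ∈ Qset n) (hα : α ≠ 0) {a b : ℕ} (ha : a ≤ n) (hb : b ≤ n) :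
    sf n (pert n X α) a b = chi n X α a b := by
  have inner : ∀ i ∈ range a, ∑ k ∈ range b, ext n (pert n X α) i k
      = (fun m => chi n X α m b - chi n X α m 0) (i + 1)
        - (fun m => chi n X α m b - chi n X α m 0) i := by
    intro i hi
    rw [pert_range_sum hα (lt_of_lt_of_le (mem_range.1 hi) ha) hb]
    simp only; rw [chi_bot hα, chi_bot hα]; ring
  rw [sf, Finset.sum_congr rfl inner]
  refine (Finset.sum_range_sub (fun m => chi n X α m b - chi n X α m 0) a).trans ?_
  rw [chi_bot hα, chi_bot hα, chi_left0 hα]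
  ring

end Chi

section Extreme

variable {X : Fin n → Fin n → ℝ}

lemma rowP_eq_sf (X : Fin n → Fin n → ℝ) (i j : Fin n) :
    ∑ j' ∈ Finset.Iic j, X i j'
      = sf n X (i.val + 1) (j.val + 1) - sf n X i.val (j.val + 1) := by
  rw [sum_Iic_eq_range, sf_row_diff]

lemma int01 {x : ℝ} (hk : ∃ k : ℤ, x = k) (h0 : 0 ≤ x) (h1 : x ≤ 1) : x = 0 ∨ x = 1 := by
  obtain ⟨k, rfl⟩ := hk
  have h0' : (0 : ℤ) ≤ k := by exact_mod_cast h0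
  have h1' : k ≤ 1 := by exact_mod_cast h1
  have : k = 0 ∨ k = 1 := by omega
  rcases this with h | h <;> simp [h]

open Classical in
noncomputable def slack (n : ℕ) (X : Fin n → Fin n → ℝ) (p : Fin n × Fin n) : ℝ :=
  if Int.fract (∑ j' ∈ Finset.Iic p.2, X p.1 j') = 0 then 1
  else min (∑ j' ∈ Finset.Iic p.2, X p.1 j') (1 - ∑ j' ∈ Finset.Iic p.2, X p.1 j')

lemma slack_pos (hQ : X ∈ Qset n) (p : Fin n × Fin n) : 0 < slack n X p := by
  unfold slack
  by_cases h : Int.fract (∑ j' ∈ Finset.Iic p.2, X p.1 j') = 0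
  · rw [if_pos h]; norm_num
  · rw [if_neg h]
    obtain ⟨h0, h1⟩ := hQ.1.1 p.1 p.2
    refine lt_min ?_ ?_
    · rcases h0.lt_or_eq with h' | h'
      · exact h'
      · exact absurd (by rw [← h']; exact Int.fract_zero) h
    · rcases h1.lt_or_eq with h' | h'
      · linarith
      · exact absurd (by rw [h']; exact Int.fract_one) h

lemma slack_eq {p : Fin n × Fin n}
    (h : Int.fract (∑ j' ∈ Finset.Iic p.2, X p.1 j') ≠ 0) :
    slack n X p
      = min (∑ j' ∈ Finset.Iic p.2, X p.1 j') (1 - ∑ j' ∈ Finset.Iic p.2, X p.1 j') := by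
  unfold slack; rw [if_neg h]

set_option maxHeartbeats 2000000 in
lemma mem_S_of_extreme (hn : 1 ≤ n)
    (hX : X ∈ Set.extremePoints ℝ (Qset n)) :
    IsASM n X ∧ ∀ i j, X i j = X j i ∧ X i j = X j.rev i.rev := by
  obtain ⟨hQ, hext⟩ := hX
  by_cases hint : ∀ a ≤ n, ∀ b ≤ n, Int.fract (sf n X a b) = 0
  · -- all corner sums are integers: X is a DASASM
    have sfint : ∀ a, a ≤ n → ∀ b, b ≤ n → ∃ k : ℤ, sf n X a b = k := by
      intro a ha b hb
      refine ⟨⌊sf n X a b⌋, ?_⟩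
      have := hint a ha b hb
      rw [Int.fract] at this; linarith
    have hbr : ∀ a, a < n → ∀ b, b ≤ n →
        (sf n X (a + 1) b - sf n X a b = 0 ∨ sf n X (a + 1) b - sf n X a b = 1) := by
      intro a ha b hb
      refine int01 ?_ ?_ ?_
      · obtain ⟨k1, e1⟩ := sfint (a + 1) (by omega) b hb
        obtain ⟨k2, e2⟩ := sfint a (by omega) b hb
        exact ⟨k1 - k2, by rw [e1, e2]; push_cast; ring⟩
      · rw [sf_row_diff]; exact (rps_bounds hQ ha hb).1
      · rw [sf_row_diff]; exact (rps_bounds hQ ha hb).2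
    have hrowP : ∀ (i j : Fin n), (∑ j' ∈ Finset.Iic j, X i j') = 0
        ∨ (∑ j' ∈ Finset.Iic j, X i j') = 1 := by
      intro i j
      rw [rowP_eq_sf]
      exact hbr i.val i.isLt (j.val + 1) (by omega)
    refine ⟨⟨?_, hrowP, ?_, hQ.1.2, ?_⟩, hQ.2⟩
    · intro i j
      have e : X i j = (sf n X (i.val + 1) (j.val + 1) - sf n X i.val (j.val + 1))
          - (sf n X (i.val + 1) j.val - sf n X i.val j.val) := by
        rw [sf_row_diff, sf_row_diff, Finset.sum_range_succ,
          ext_apply' X i.isLt j.isLt]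
        simp [Fin.eta]
      rcases hbr i.val i.isLt (j.val + 1) (by omega) with h1 | h1 <;>
        rcases hbr i.val i.isLt j.val (by omega) with h2 | h2 <;>
        rw [e, h1, h2] <;> norm_num
    · intro i j
      have : ∑ i' ∈ Finset.Iic i, X i' j = ∑ i' ∈ Finset.Iic i, X j i' :=
        Finset.sum_congr rfl fun i' _ => (hQ.2 i' j).1
      rw [this]
      exact hrowP j i
    · intro j
      have : ∑ i, X i j = ∑ i, X j i := Finset.sum_congr rfl fun i _ => (hQ.2 i j).1
      rw [this]; exact hQ.1.2 j
  · exfalso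
    push_neg at hint
    obtain ⟨a₀, ha₀, b₀, hb₀, hfr⟩ := hint
    set α := Int.fract (sf n X a₀ b₀) with hαdef
    have hα : α ≠ 0 := hfr
    haveI : Nonempty (Fin n) := ⟨⟨0, hn⟩⟩
    set D := pert n X α with hD
    have hne : (Finset.univ : Finset (Fin n × Fin n)).Nonempty := Finset.univ_nonempty
    set ε := Finset.inf' Finset.univ hne (slack n X) with hεdef
    have hεpos : 0 < ε := by
      rw [hεdef, Finset.lt_inf'_iff]
      exact fun p _ => slack_pos hQ p
    have key : ∀ e : ℝ, |e| ≤ ε → X + e • D ∈ Qset n := by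
      intro e he
      have hrp : ∀ (i j : Fin n), ∑ j' ∈ Finset.Iic j, (X + e • D) i j'
          = (∑ j' ∈ Finset.Iic j, X i j')
            + e * (chi n X α (i.val + 1) (j.val + 1) - chi n X α i.val (j.val + 1)) := by
        intro i j
        have hptw : ∀ j' ∈ Finset.Iic j, (X + e • D) i j' = X i j' + e * D i j' := by
          intro j' _; simp
        rw [Finset.sum_congr rfl hptw, Finset.sum_add_distrib, ← Finset.mul_sum, hD,
          pert_row_prefix hα]
      refine ⟨⟨?_, ?_⟩, ?_⟩
      · intro i j
        rw [hrp i j]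
        set c1 := chi n X α (i.val + 1) (j.val + 1)
        set c2 := chi n X α i.val (j.val + 1)
        by_cases hc : c1 = c2
        · rw [hc, sub_self, mul_zero, add_zero]; exact hQ.1.1 i j
        · have hfr_ne : Int.fract (∑ j' ∈ Finset.Iic j, X i j') ≠ 0 := by
            intro h0
            apply hc
            have hrpint : ∃ k : ℤ, (∑ j' ∈ Finset.Iic j, X i j') = k := by
              refine ⟨⌊(∑ j' ∈ Finset.Iic j, X i j')⌋, ?_⟩
              rw [Int.fract] at h0; linarith
            obtain ⟨k, hk⟩ := hrpint
            refine chi_eq_chi (fract_eq_of_sub_int k ?_)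
            have hre := rowP_eq_sf X i j
            rw [hk] at hre
            linarith
          have hεle : ε ≤ min (∑ j' ∈ Finset.Iic j, X i j')
              (1 - ∑ j' ∈ Finset.Iic j, X i j') := by
            have h := Finset.inf'_le (slack n X) (Finset.mem_univ (i, j))
            rw [← hεdef] at h
            rw [slack_eq (p := (i, j)) hfr_ne] at h
            exact h
          have hd1 : -1 ≤ c1 - c2 ∧ c1 - c2 ≤ 1 := by
            rcases chi_mem (X := X) (α := α) (i.val + 1) (j.val + 1) with h1 | h1 <;>
              rcases chi_mem (X := X) (α := α) i.val (j.val + 1) with h2 | h2 <;>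
              rw [show c1 = chi n X α (i.val + 1) (j.val + 1) from rfl,
                show c2 = chi n X α i.val (j.val + 1) from rfl, h1, h2] <;> norm_num
          have habs : |e * (c1 - c2)| ≤ ε := by
            rw [abs_mul]
            calc |e| * |c1 - c2| ≤ ε * 1 := by
                  apply mul_le_mul he (abs_le.mpr hd1) (abs_nonneg _) (le_of_lt hεpos)
            _ = ε := mul_one ε
          have hlow := neg_abs_le (e * (c1 - c2))
          have hup := le_abs_self (e * (c1 - c2))
          have hm1 := min_le_left (∑ j' ∈ Finset.Iic j, X i j')
            (1 - ∑ j' ∈ Finset.Iic j, X i j')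
          have hm2 := min_le_right (∑ j' ∈ Finset.Iic j, X i j')
            (1 - ∑ j' ∈ Finset.Iic j, X i j')
          constructor <;> linarith
      · intro i
        have hptw : ∀ j ∈ Finset.univ, (X + e • D) i j = X i j + e * D i j := by
          intro j _; simp
        rw [Finset.sum_congr rfl hptw, Finset.sum_add_distrib, ← Finset.mul_sum, hD,
          pert_row_total hQ hα, hQ.1.2 i, mul_zero, add_zero]
      · intro i j
        constructor
        · show (X + e • D) i j = (X + e • D) j i
          simp only [Pi.add_apply, Pi.smul_apply, smul_eq_mul]
          rw [(hQ.2 i j).1, hD, pert_symm1 hQ i j]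
        · show (X + e • D) i j = (X + e • D) j.rev i.rev
          simp only [Pi.add_apply, Pi.smul_apply, smul_eq_mul]
          rw [(hQ.2 i j).2, hD, pert_symm2 hQ i j]
    have hYp := key ε (le_of_eq (abs_of_pos hεpos))
    have hYm := key (-ε) (by rw [abs_neg]; exact le_of_eq (abs_of_pos hεpos))
    have hseg : X ∈ openSegment ℝ (X + ε • D) (X + (-ε) • D) :=
      ⟨1 / 2, 1 / 2, by norm_num, by norm_num, by norm_num, by module⟩
    have h1 := hext hYp hYm hseg
    have hεD : ε • D = 0 := by
      have := congrArg (fun Z => Z - X) h1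
      simpa using this
    have hD0 : D = 0 := by
      rcases smul_eq_zero.mp hεD with h | h
      · exact absurd h (ne_of_gt hεpos)
      · exact h
    have h1' : sf n (pert n X α) a₀ b₀ = chi n X α a₀ b₀ := sf_pert hQ hα ha₀ hb₀
    have hchi : chi n X α a₀ b₀ = 1 := by unfold chi; rw [if_pos hαdef.symm]
    have hz : sf n (pert n X α) a₀ b₀ = 0 := by
      rw [← hD, hD0]
      simp [sf, ext]
    rw [h1', hchi] at hz
    exact one_ne_zero hz

end Extreme

section Polytope

lemma entry_eq (X : Fin n → Fin n → ℝ) (i j : Fin n) :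
    X i j = (sf n X (i.val + 1) (j.val + 1) - sf n X i.val (j.val + 1))
      - (sf n X (i.val + 1) j.val - sf n X i.val j.val) := by
  rw [sf_row_diff, sf_row_diff, Finset.sum_range_succ, ext_apply' X i.isLt j.isLt]
  simp [Fin.eta]

def Sset (n : ℕ) : Set (Fin n → Fin n → ℝ) :=
  {X | IsASM n X ∧ ∀ i j, X i j = X j i ∧ X i j = X j.rev i.rev}

lemma S_subset_Q : Sset n ⊆ Qset n := by
  rintro X ⟨hA, hs⟩
  refine ⟨⟨?_, hA.2.2.2.1⟩, hs⟩
  intro i j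
  rcases hA.2.1 i j with h | h <;> rw [h] <;> norm_num

lemma Lset_convex : Convex ℝ (Lset n) := by
  intro x hx y hy a b _ _ _
  intro i j
  constructor <;> simp only [Pi.add_apply, Pi.smul_apply, smul_eq_mul]
  · rw [(hx i j).1, (hy i j).1]
  · rw [(hx i j).2, (hy i j).2]

lemma Cset_convex : Convex ℝ (Cset n) := by
  intro x hx y hy a b ha hb hab
  constructor
  · intro i j
    have hsum : ∑ j' ∈ Finset.Iic j, (a • x + b • y) i j'
        = a * (∑ j' ∈ Finset.Iic j, x i j') + b * (∑ j' ∈ Finset.Iic j, y i j') := by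
      rw [Finset.mul_sum, Finset.mul_sum, ← Finset.sum_add_distrib]
      exact Finset.sum_congr rfl fun k _ => by simp
    obtain ⟨hx0, hx1⟩ := hx.1 i j
    obtain ⟨hy0, hy1⟩ := hy.1 i j
    rw [hsum]
    constructor
    · nlinarith [mul_nonneg ha hx0, mul_nonneg hb hy0]
    · nlinarith
  · intro i
    have hsum : ∑ j, (a • x + b • y) i j = a * (∑ j, x i j) + b * (∑ j, y i j) := by
      rw [Finset.mul_sum, Finset.mul_sum, ← Finset.sum_add_distrib]
      exact Finset.sum_congr rfl fun k _ => by simp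
    rw [hsum, hx.2 i, hy.2 i]
    linarith

lemma rowP_continuous (i j : Fin n) :
    Continuous fun X : Fin n → Fin n → ℝ => ∑ j' ∈ Finset.Iic j, X i j' :=
  continuous_finset_sum _ fun c _ => (continuous_apply c).comp (continuous_apply i)

lemma Cset_closed : IsClosed (Cset n) := by
  unfold Cset
  rw [Set.setOf_and]
  apply IsClosed.inter
  · rw [Set.setOf_forall]
    apply isClosed_iInter; intro i
    rw [Set.setOf_forall]
    apply isClosed_iInter; intro j
    rw [Set.setOf_and]
    exact (isClosed_le continuous_const (rowP_continuous i j)).inter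
      (isClosed_le (rowP_continuous i j) continuous_const)
  · rw [Set.setOf_forall]
    apply isClosed_iInter; intro i
    exact isClosed_eq (continuous_finset_sum _ fun c _ =>
      (continuous_apply c).comp (continuous_apply i)) continuous_const

lemma Lset_closed : IsClosed (Lset n) := by
  unfold Lset
  rw [Set.setOf_forall]
  apply isClosed_iInter; intro i
  rw [Set.setOf_forall]
  apply isClosed_iInter; intro j
  rw [Set.setOf_and]
  exact (isClosed_eq ((continuous_apply j).comp (continuous_apply i))
      ((continuous_apply i).comp (continuous_apply j))).inter
    (isClosed_eq ((continuous_apply j).comp (continuous_apply i))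
      ((continuous_apply i.rev).comp (continuous_apply j.rev)))

lemma Qset_convex : Convex ℝ (Qset n) := (Cset_convex).inter (Lset_convex)

lemma Qset_compact : IsCompact (Qset n) := by
  refine Metric.isCompact_of_isClosed_isBounded (Cset_closed.inter Lset_closed) ?_
  refine (Metric.isBounded_closedBall (x := (0 : Fin n → Fin n → ℝ)) (r := 1)).subset ?_
  intro X hX
  rw [Metric.mem_closedBall, dist_zero_right]
  rw [pi_norm_le_iff_of_nonneg zero_le_one]
  intro i
  rw [pi_norm_le_iff_of_nonneg zero_le_one]
  intro j
  rw [Real.norm_eq_abs, abs_le]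
  have e := entry_eq X i j
  have h1 : 0 ≤ sf n X (i.val + 1) (j.val + 1) - sf n X i.val (j.val + 1) ∧
      sf n X (i.val + 1) (j.val + 1) - sf n X i.val (j.val + 1) ≤ 1 := by
    rw [sf_row_diff]; exact rps_bounds hX i.isLt (by omega)
  have h2 : 0 ≤ sf n X (i.val + 1) j.val - sf n X i.val j.val ∧
      sf n X (i.val + 1) j.val - sf n X i.val j.val ≤ 1 := by
    rw [sf_row_diff]; exact rps_bounds hX i.isLt (by omega)
  constructor <;> linarith [h1.1, h1.2, h2.1, h2.2]

lemma Sset_finite : (Sset n).Finite := by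
  refine Set.Finite.subset
    (Set.Finite.pi (t := fun _ : Fin n => Set.pi Set.univ
        fun _ : Fin n => ({-1, 0, 1} : Set ℝ))
      fun i => Set.Finite.pi fun j => by
        exact (Set.finite_singleton (1 : ℝ)).insert 0 |>.insert (-1)) ?_
  rintro X ⟨hA, -⟩
  rw [Set.mem_univ_pi]
  intro i
  rw [Set.mem_univ_pi]
  intro j
  rcases hA.1 i j with h | h | h <;> simp [h]

lemma Q_subset_hullS (hn : 1 ≤ n) : Qset n ⊆ convexHull ℝ (Sset n) := by
  have hKM := closure_convexHull_extremePoints Qset_compact (Qset_convex (n := n))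
  calc Qset n = closure (convexHull ℝ ((Qset n).extremePoints ℝ)) := hKM.symm
    _ ⊆ closure (convexHull ℝ (Sset n)) :=
        closure_mono (convexHull_mono fun X hX => mem_S_of_extreme hn hX)
    _ = convexHull ℝ (Sset n) := (Sset_finite.isClosed_convexHull (𝕜 := ℝ)).closure_eq

lemma hullA_inter_L_subset_Q :
    convexHull ℝ {X : Fin n → Fin n → ℝ | IsASM n X} ∩ Lset n ⊆ Qset n := by
  rintro X ⟨hA, hL⟩
  refine ⟨?_, hL⟩
  have hsub : {X : Fin n → Fin n → ℝ | IsASM n X} ⊆ Cset n := by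
    rintro Y hY
    refine ⟨fun i j => ?_, hY.2.2.2.1⟩
    rcases hY.2.1 i j with h | h <;> rw [h] <;> norm_num
  exact convexHull_min hsub Cset_convex hA

lemma hullS_eq_Q (hn : 1 ≤ n) : convexHull ℝ (Sset n) = Qset n :=
  le_antisymm (convexHull_min S_subset_Q Qset_convex) (Q_subset_hullS hn)

lemma part1 (hn : 1 ≤ n) :
    convexHull ℝ (Sset n)
      = convexHull ℝ {X : Fin n → Fin n → ℝ | IsASM n X} ∩ Lset n := by
  apply le_antisymm
  · refine Set.subset_inter ?_ ?_
    · exact convexHull_mono fun X hX => hX.1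
    · exact convexHull_min (fun X hX => hX.2) Lset_convex
  · exact (hullA_inter_L_subset_Q).trans (Q_subset_hullS hn)

end Polytope

section Dim

def Wsub (n : ℕ) : Submodule ℝ (Fin n → Fin n → ℝ) where
  carrier := {D | (∀ i j, D i j = D j i ∧ D i j = D j.rev i.rev) ∧ ∀ i, ∑ j, D i j = 0}
  add_mem' := by
    rintro x y ⟨hx1, hx2⟩ ⟨hy1, hy2⟩
    constructor
    · intro i j
      constructor <;> simp only [Pi.add_apply]
      · rw [(hx1 i j).1, (hy1 i j).1]
      · rw [(hx1 i j).2, (hy1 i j).2]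
    · intro i
      have : ∑ j, (x + y) i j = (∑ j, x i j) + ∑ j, y i j := by
        rw [← Finset.sum_add_distrib]; rfl
      rw [this, hx2 i, hy2 i, add_zero]
  zero_mem' := by
    refine ⟨fun i j => by simp, fun i => by simp⟩
  smul_mem' := by
    rintro c x ⟨hx1, hx2⟩
    constructor
    · intro i j
      constructor <;> simp only [Pi.smul_apply, smul_eq_mul]
      · rw [(hx1 i j).1]
      · rw [(hx1 i j).2]
    · intro i
      have : ∑ j, (c • x) i j = c * ∑ j, x i j := by
        rw [Finset.mul_sum]; rfl
      rw [this, hx2 i, mul_zero]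

lemma vspan_le : vectorSpan ℝ (Qset n) ≤ Wsub n := by
  rw [vectorSpan, Submodule.span_le]
  rintro v hv
  rw [Set.mem_vsub] at hv
  obtain ⟨x, hx, y, hy, rfl⟩ := hv
  refine ⟨fun i j => ?_, fun i => ?_⟩
  · constructor <;> simp only [vsub_eq_sub, Pi.sub_apply]
    · rw [(hx.2 i j).1, (hy.2 i j).1]
    · rw [(hx.2 i j).2, (hy.2 i j).2]
  · have : ∑ j, (x -ᵥ y) i j = (∑ j, x i j) - ∑ j, y i j := by
      rw [← Finset.sum_sub_distrib]; rfl
    rw [this, hx.1.2 i, hy.1.2 i, sub_self]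

noncomputable def unif (n : ℕ) : Fin n → Fin n → ℝ := fun _ _ => 1 / n

lemma unif_rowP (i j : Fin n) :
    ∑ j' ∈ Finset.Iic j, unif n i j' = (↑j.val + 1) / n := by
  unfold unif
  rw [Finset.sum_const, Fin.card_Iic]
  push_cast
  ring

lemma unif_mem_Q (hn : 1 ≤ n) : unif n ∈ Qset n := by
  have hnR : (0 : ℝ) < n := by exact_mod_cast hn
  refine ⟨⟨fun i j => ?_, fun i => ?_⟩, fun i j => ⟨rfl, rfl⟩⟩
  · rw [unif_rowP]
    constructor
    · positivity
    · rw [div_le_one hnR]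
      have : (j.val + 1 : ℕ) ≤ n := j.isLt
      exact_mod_cast this
  · have : ∀ j : Fin n, unif n i j = 1 / (n : ℝ) := fun _ => rfl
    rw [Finset.sum_congr rfl fun j _ => this j, Finset.sum_const, Finset.card_univ,
      Fintype.card_fin]
    rw [nsmul_eq_mul, mul_one_div_cancel (ne_of_gt hnR)]

lemma vspan_ge (hn : 1 ≤ n) : Wsub n ≤ vectorSpan ℝ (Qset n) := by
  intro D hD
  obtain ⟨hsym, hrow⟩ := hD
  have hnR : (0 : ℝ) < n := by exact_mod_cast hn
  set M := ∑ i, ∑ j, |D i j| with hMdef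
  have hM0 : 0 ≤ M :=
    Finset.sum_nonneg fun i _ => Finset.sum_nonneg fun j _ => abs_nonneg _
  set c : ℝ := 1 / (↑n * (M + 1)) with hcdef
  have hc0 : 0 < c := by rw [hcdef]; positivity
  have hcM : c * (M + 1) = 1 / n := by rw [hcdef]; field_simp
  have htb : ∀ (i j : Fin n), |∑ j' ∈ Finset.Iic j, D i j'| ≤ M := by
    intro i j
    calc |∑ j' ∈ Finset.Iic j, D i j'| ≤ ∑ j' ∈ Finset.Iic j, |D i j'| :=
          Finset.abs_sum_le_sum_abs _ _
      _ ≤ ∑ j', |D i j'| :=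
          Finset.sum_le_sum_of_subset_of_nonneg (Finset.subset_univ _)
            (fun _ _ _ => abs_nonneg _)
      _ ≤ M := by
          rw [hMdef]
          exact Finset.single_le_sum (f := fun i' => ∑ j', |D i' j'|)
            (fun i' _ => Finset.sum_nonneg fun _ _ => abs_nonneg _) (Finset.mem_univ i)
  have hmem : unif n + c • D ∈ Qset n := by
    refine ⟨⟨fun i j => ?_, fun i => ?_⟩, fun i j => ?_⟩
    · have hs : ∑ j' ∈ Finset.Iic j, (unif n + c • D) i j'
          = (↑j.val + 1) / n + c * ∑ j' ∈ Finset.Iic j, D i j' := by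
        have hp : ∀ j' ∈ Finset.Iic j, (unif n + c • D) i j' = unif n i j' + c * D i j' :=
          fun _ _ => by simp
        rw [Finset.sum_congr rfl hp, Finset.sum_add_distrib, ← Finset.mul_sum, unif_rowP]
      rw [hs]
      have hb := htb i j
      by_cases hlast : j.val + 1 = n
      · have hIic : Finset.Iic j = Finset.univ := by
          ext k
          simp only [Finset.mem_Iic, Finset.mem_univ, iff_true, Fin.le_def]
          have := k.isLt; omega
        have hcast : (↑j.val + 1 : ℝ) = (n : ℝ) := by exact_mod_cast hlast
        rw [hIic, hrow i, mul_zero, add_zero, hcast, div_self (ne_of_gt hnR)]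
        norm_num
      · have hj2 : j.val + 1 ≤ n - 1 := by have := j.isLt; omega
        have hj1 : (↑j.val + 1 : ℝ) ≤ ↑n - 1 := by
          calc (↑j.val + 1 : ℝ) = ((j.val + 1 : ℕ) : ℝ) := by push_cast; ring
            _ ≤ ((n - 1 : ℕ) : ℝ) := by exact_mod_cast hj2
            _ = ↑n - 1 := by push_cast [hn]; ring
        have hct : |c * ∑ j' ∈ Finset.Iic j, D i j'| ≤ c * M := by
          rw [abs_mul, abs_of_pos hc0]
          exact mul_le_mul_of_nonneg_left hb (le_of_lt hc0)
        have hcM' : c * M < 1 / n := by nlinarith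
        have hlo := neg_abs_le (c * ∑ j' ∈ Finset.Iic j, D i j')
        have hhi := le_abs_self (c * ∑ j' ∈ Finset.Iic j, D i j')
        have hjn : (1 : ℝ) / n ≤ (↑j.val + 1) / n := by
          have h1 : (↑j.val + 1 : ℝ) / n = ↑j.val / n + 1 / n := by ring
          have h2 : (0 : ℝ) ≤ ↑j.val / n := by positivity
          linarith
        have hjn2 : (↑j.val + 1 : ℝ) / n ≤ (↑n - 1) / n := by
          have h1 : ((n : ℝ) - 1) / n - (↑j.val + 1) / n = ((n : ℝ) - 1 - (↑j.val + 1)) / n := by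
            ring
          have h2 : (0 : ℝ) ≤ ((n : ℝ) - 1 - (↑j.val + 1)) / n :=
            div_nonneg (by linarith) (le_of_lt hnR)
          linarith
        constructor
        · linarith
        · have : ((n : ℝ) - 1) / n + 1 / n = 1 := by field_simp; ring
          linarith
    · have hp : ∀ j ∈ Finset.univ, (unif n + c • D) i j = unif n i j + c * D i j :=
        fun _ _ => by simp
      rw [Finset.sum_congr rfl hp, Finset.sum_add_distrib, ← Finset.mul_sum, hrow i,
        mul_zero, add_zero]
      exact (unif_mem_Q hn).1.2 i
    · constructor <;> simp only [Pi.add_apply, Pi.smul_apply, smul_eq_mul, unif]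
      · rw [(hsym i j).1]
      · rw [(hsym i j).2]
  have hvs : (unif n + c • D) -ᵥ unif n ∈ vectorSpan ℝ (Qset n) :=
    vsub_mem_vectorSpan ℝ hmem (unif_mem_Q hn)
  have he : (unif n + c • D) -ᵥ unif n = c • D := by
    rw [vsub_eq_sub]; abel
  rw [he] at hvs
  have := Submodule.smul_mem _ c⁻¹ hvs
  rwa [smul_smul, inv_mul_cancel₀ (ne_of_gt hc0), one_smul] at this

lemma vspan_eq (hn : 1 ≤ n) : vectorSpan ℝ (Qset n) = Wsub n :=
  le_antisymm vspan_le (vspan_ge hn)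

end Dim

section Rank

lemma rev_val (k : Fin n) : (k.rev : ℕ) = n - 1 - k.val := by
  simp [Fin.rev]; omega

lemma val_min (a b : Fin n) : (min a b).val = min a.val b.val := by
  rcases le_total a b with h | h
  · rw [min_eq_left h, min_eq_left (Fin.le_def.mp h)]
  · rw [min_eq_right h, min_eq_right (Fin.le_def.mp h)]

lemma val_max (a b : Fin n) : (max a b).val = max a.val b.val := by
  rcases le_total a b with h | h
  · rw [max_eq_right h, max_eq_right (Fin.le_def.mp h)]
  · rw [max_eq_left h, max_eq_left (Fin.le_def.mp h)]

/-- Representative of the orbit of a cell under the symmetry group. -/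
def rep (n : ℕ) (p : Fin n × Fin n) : Fin n × Fin n :=
  if p.1.val + p.2.val < n then (min p.1 p.2, max p.1 p.2)
  else ((max p.1 p.2).rev, (min p.1 p.2).rev)

abbrev Tidx (n : ℕ) := {p : Fin n × Fin n // p.1 < p.2 ∧ p.1.val + p.2.val < n}

lemma rep_spec (p : Fin n × Fin n) :
    (rep n p).1 ≤ (rep n p).2 ∧ (rep n p).1.val + (rep n p).2.val < n := by
  have h1 := p.1.isLt
  have h2 := p.2.isLt
  unfold rep
  split_ifs with h
  · exact ⟨min_le_max, by simp only [val_min, val_max]; omega⟩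
  · constructor
    · rw [Fin.le_def, rev_val, rev_val, val_min, val_max]; omega
    · rw [rev_val, rev_val, val_min, val_max]; omega

lemma rep_offdiag {p : Fin n × Fin n} (h : p.1 ≠ p.2) : (rep n p).1 < (rep n p).2 := by
  have h1 := p.1.isLt
  have h2 := p.2.isLt
  have hne : p.1.val ≠ p.2.val := fun hv => h (Fin.ext hv)
  unfold rep
  split_ifs with hc
  · rw [Fin.lt_def, val_min, val_max]; omega
  · rw [Fin.lt_def, rev_val, rev_val, val_min, val_max]; omega

lemma rep_fix {p : Fin n × Fin n} (hlt : p.1 < p.2) (hs : p.1.val + p.2.val < n) :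
    rep n p = p := by
  unfold rep
  rw [if_pos hs, min_eq_left (le_of_lt hlt), max_eq_right (le_of_lt hlt)]

lemma rep_swap (p : Fin n × Fin n) : rep n (p.2, p.1) = rep n p := by
  unfold rep
  rw [show (p.2, p.1).1 = p.2 from rfl, show (p.2, p.1).2 = p.1 from rfl,
    Nat.add_comm (p.2.val), min_comm p.2, max_comm p.2]

lemma rev_min (a b : Fin n) : (min a b).rev = max a.rev b.rev := by
  apply Fin.ext
  rw [rev_val, val_min, val_max, rev_val, rev_val]
  have := a.isLt; have := b.isLt
  omega

lemma rev_max (a b : Fin n) : (max a b).rev = min a.rev b.rev := by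
  apply Fin.ext
  rw [rev_val, val_max, val_min, rev_val, rev_val]
  have := a.isLt; have := b.isLt
  omega

lemma rep_anti (p : Fin n × Fin n) : rep n (p.2.rev, p.1.rev) = rep n p := by
  have h1 := p.1.isLt
  have h2 := p.2.isLt
  rcases lt_trichotomy (p.1.val + p.2.val + 1) n with hlt | heq | hgt
  · -- p1 + p2 ≤ n - 2 : the reversed pair lies below the antidiagonal
    have hc1 : ¬ ((p.2.rev : Fin n).val + (p.1.rev : Fin n).val < n) := by
      rw [rev_val, rev_val]; omega
    have hc2 : p.1.val + p.2.val < n := by omega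
    unfold rep
    rw [show (p.2.rev, p.1.rev).1 = p.2.rev from rfl, show (p.2.rev, p.1.rev).2 = p.1.rev from rfl,
      if_neg hc1, if_pos hc2, Prod.mk.injEq]
    constructor <;> apply Fin.ext
    · rw [rev_val, val_max, rev_val, rev_val, val_min]; omega
    · rw [rev_val, val_min, rev_val, rev_val, val_max]; omega
  · -- on the antidiagonal : the pair is fixed
    have e1 : p.2.rev = p.1 := Fin.ext (by rw [rev_val]; omega)
    have e2 : p.1.rev = p.2 := Fin.ext (by rw [rev_val]; omega)
    rw [e1, e2]
  · have hc1 : (p.2.rev : Fin n).val + (p.1.rev : Fin n).val < n := by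
      rw [rev_val, rev_val]; omega
    have hc2 : ¬ (p.1.val + p.2.val < n) := by omega
    unfold rep
    rw [show (p.2.rev, p.1.rev).1 = p.2.rev from rfl, show (p.2.rev, p.1.rev).2 = p.1.rev from rfl,
      if_pos hc1, if_neg hc2, Prod.mk.injEq]
    constructor <;> apply Fin.ext
    · rw [val_min, rev_val, rev_val, rev_val, val_max]; omega
    · rw [val_max, rev_val, rev_val, rev_val, val_min]; omega

lemma W_const {D : Fin n → Fin n → ℝ} (hD : D ∈ Wsub n) (p : Fin n × Fin n) :
    D p.1 p.2 = D (rep n p).1 (rep n p).2 := by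
  obtain ⟨hsym, -⟩ := hD
  unfold rep
  split_ifs with hc
  · rcases le_total p.1 p.2 with h | h
    · rw [min_eq_left h, max_eq_right h]
    · rw [min_eq_right h, max_eq_left h]
      exact (hsym p.1 p.2).1
  · rcases le_total p.1 p.2 with h | h
    · rw [max_eq_right h, min_eq_left h]
      exact (hsym p.1 p.2).2
    · rw [max_eq_left h, min_eq_right h]
      rw [(hsym p.1 p.2).1]
      exact (hsym p.2 p.1).2

open Classical in
noncomputable def tilde (n : ℕ) (f : Tidx n → ℝ) (p : Fin n × Fin n) : ℝ :=
  if h : (rep n p).1 < (rep n p).2 ∧ (rep n p).1.val + (rep n p).2.val < n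
  then f ⟨rep n p, h⟩ else 0

lemma tilde_congr {f : Tidx n → ℝ} {p q : Fin n × Fin n} (h : rep n p = rep n q) :
    tilde n f p = tilde n f q := by
  unfold tilde
  rw [h]

lemma tilde_add (f g : Tidx n → ℝ) (p : Fin n × Fin n) :
    tilde n (f + g) p = tilde n f p + tilde n g p := by
  unfold tilde
  split <;> simp

lemma tilde_smul (c : ℝ) (f : Tidx n → ℝ) (p : Fin n × Fin n) :
    tilde n (c • f) p = c * tilde n f p := by
  unfold tilde
  split <;> simp

open Classical in
noncomputable def psiFun (n : ℕ) (f : Tidx n → ℝ) : Fin n → Fin n → ℝ :=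
  fun i j => if i = j then -(∑ k ∈ Finset.univ.erase i, tilde n f (i, k)) else tilde n f (i, j)

lemma psiFun_offdiag (f : Tidx n → ℝ) {i j : Fin n} (h : i ≠ j) :
    psiFun n f i j = tilde n f (i, j) := by
  unfold psiFun; rw [if_neg h]

lemma psiFun_diag (f : Tidx n → ℝ) (i : Fin n) :
    psiFun n f i i = -(∑ k ∈ Finset.univ.erase i, tilde n f (i, k)) := by
  unfold psiFun; rw [if_pos rfl]

lemma psiFun_rowsum (f : Tidx n → ℝ) (i : Fin n) : ∑ j, psiFun n f i j = 0 := by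
  rw [← Finset.sum_erase_add _ _ (Finset.mem_univ i), psiFun_diag]
  have : ∀ k ∈ Finset.univ.erase i, psiFun n f i k = tilde n f (i, k) := by
    intro k hk
    exact psiFun_offdiag f (Ne.symm (Finset.mem_erase.mp hk).1)
  rw [Finset.sum_congr rfl this]
  ring

lemma psiFun_mem (f : Tidx n → ℝ) : psiFun n f ∈ Wsub n := by
  refine ⟨fun i j => ?_, psiFun_rowsum f⟩
  constructor
  · by_cases h : i = j
    · subst h; rfl
    · rw [psiFun_offdiag f h, psiFun_offdiag f (Ne.symm h)]
      exact tilde_congr (rep_swap (i, j)).symm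
  · by_cases h : i = j
    · subst h
      rw [psiFun_diag, psiFun_diag]
      congr 1
      refine Finset.sum_nbij' (fun k => k.rev) (fun k => k.rev) ?_ ?_ ?_ ?_ ?_
      · intro k hk
        simp only [Finset.mem_erase, Finset.mem_univ, and_true] at hk ⊢
        exact fun hc => hk (Fin.rev_injective hc)
      · intro k hk
        simp only [Finset.mem_erase, Finset.mem_univ, and_true] at hk ⊢
        intro hc
        exact hk (by rw [← hc, Fin.rev_rev])
      · intro k _; exact Fin.rev_rev k
      · intro k _; exact Fin.rev_rev k
      · intro k _
        refine tilde_congr ?_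
        exact ((rep_anti (k, i)).trans (rep_swap (i, k))).symm
    · have hrev : i.rev ≠ j.rev := fun hc => h (Fin.rev_injective hc)
      rw [psiFun_offdiag f h, psiFun_offdiag f (Ne.symm hrev)]
      exact (tilde_congr (rep_anti (i, j))).symm

noncomputable def psiL (n : ℕ) : (Tidx n → ℝ) →ₗ[ℝ] (Wsub n) where
  toFun f := ⟨psiFun n f, psiFun_mem f⟩
  map_add' f g := by
    apply Subtype.ext
    funext i j
    show psiFun n (f + g) i j = psiFun n f i j + psiFun n g i j
    by_cases h : i = j
    · subst h
      rw [psiFun_diag, psiFun_diag, psiFun_diag]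
      rw [show (∑ k ∈ Finset.univ.erase i, tilde n (f + g) (i, k))
          = ∑ k ∈ Finset.univ.erase i, (tilde n f (i, k) + tilde n g (i, k)) from
        Finset.sum_congr rfl fun k _ => tilde_add f g (i, k), Finset.sum_add_distrib]
      ring
    · rw [psiFun_offdiag _ h, psiFun_offdiag _ h, psiFun_offdiag _ h, tilde_add]
  map_smul' c f := by
    apply Subtype.ext
    funext i j
    show psiFun n (c • f) i j = c * psiFun n f i j
    by_cases h : i = j
    · subst h
      rw [psiFun_diag, psiFun_diag]
      rw [show (∑ k ∈ Finset.univ.erase i, tilde n (c • f) (i, k))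
          = ∑ k ∈ Finset.univ.erase i, (c * tilde n f (i, k)) from
        Finset.sum_congr rfl fun k _ => tilde_smul c f (i, k), ← Finset.mul_sum]
      ring
    · rw [psiFun_offdiag _ h, psiFun_offdiag _ h, tilde_smul]

def rhoL (n : ℕ) : (Wsub n) →ₗ[ℝ] (Tidx n → ℝ) where
  toFun D := fun t => (D : Fin n → Fin n → ℝ) t.val.1 t.val.2
  map_add' D E := rfl
  map_smul' c D := rfl

lemma tilde_rho {D : Fin n → Fin n → ℝ} (hD : D ∈ Wsub n) {p : Fin n × Fin n}
    (h : p.1 ≠ p.2) : tilde n (rhoL n ⟨D, hD⟩) p = D p.1 p.2 := by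
  unfold tilde
  rw [dif_pos ⟨rep_offdiag h, (rep_spec p).2⟩]
  show D (rep n p).1 (rep n p).2 = D p.1 p.2
  exact (W_const hD p).symm

noncomputable def WEquiv (n : ℕ) : (Tidx n → ℝ) ≃ₗ[ℝ] (Wsub n) := by
  refine LinearEquiv.ofLinear (psiL n) (rhoL n) ?_ ?_
  · -- psiL ∘ rhoL = id on Wsub
    apply LinearMap.ext
    rintro ⟨D, hD⟩
    apply Subtype.ext
    funext i j
    show psiFun n (rhoL n ⟨D, hD⟩) i j = D i j
    by_cases h : i = j
    · subst h
      rw [psiFun_diag]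
      have he : ∀ k ∈ Finset.univ.erase i, tilde n (rhoL n ⟨D, hD⟩) (i, k) = D i k := by
        intro k hk
        exact tilde_rho hD (Ne.symm (Finset.mem_erase.mp hk).1)
      rw [Finset.sum_congr rfl he]
      have hsum := hD.2 i
      rw [← Finset.sum_erase_add _ _ (Finset.mem_univ i)] at hsum
      linarith
    · rw [psiFun_offdiag _ h]
      exact tilde_rho hD h
  · -- rhoL ∘ psiL = id
    apply LinearMap.ext
    intro f
    funext t
    obtain ⟨p, hp1, hp2⟩ := t
    show psiFun n f p.1 p.2 = f ⟨p, hp1, hp2⟩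
    rw [psiFun_offdiag _ (ne_of_lt hp1)]
    unfold tilde
    have hfix : rep n (p.1, p.2) = p := by
      rw [show (p.1, p.2) = p from rfl]
      exact rep_fix hp1 hp2
    rw [dif_pos (by rw [hfix]; exact ⟨hp1, hp2⟩)]
    congr 1
    exact Subtype.ext hfix

lemma finrank_W (n : ℕ) : Module.finrank ℝ (Wsub n) = Fintype.card (Tidx n) := by
  rw [← (WEquiv n).finrank_eq, Module.finrank_fintype_fun_eq_card]

end Rank

section Count

lemma sumform (n : ℕ) : ∑ i ∈ range n, ((n - i) - (i + 1)) = n ^ 2 / 4 := by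
  induction n using Nat.strong_induction_on with
  | _ n ih =>
    match n with
    | 0 => simp
    | 1 => simp
    | (m + 2) =>
      have h1 : ∑ i ∈ range (m + 2), ((m + 2 - i) - (i + 1))
          = (∑ i ∈ range (m + 1), ((m + 2 - (i + 1)) - (i + 1 + 1))) + ((m + 2 - 0) - (0 + 1)) :=
        Finset.sum_range_succ' _ (m + 1)
      have h2 : ∑ i ∈ range (m + 1), ((m + 2 - (i + 1)) - (i + 1 + 1))
          = ∑ i ∈ range (m + 1), ((m - i) - (i + 1)) :=
        Finset.sum_congr rfl fun i _ => by omega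
      have h3 : ∑ i ∈ range (m + 1), ((m - i) - (i + 1))
          = (∑ i ∈ range m, ((m - i) - (i + 1))) + ((m - m) - (m + 1)) :=
        Finset.sum_range_succ _ m
      rw [h1, h2, h3, ih m (by omega)]
      have e1 : (m + 2) ^ 2 = m ^ 2 + 4 * m + 4 := by ring
      rw [e1]
      generalize m ^ 2 = k
      omega

lemma natcount (n : ℕ) :
    (((range n) ×ˢ (range n)).filter fun p => p.1 < p.2 ∧ p.1 + p.2 < n).card = n ^ 2 / 4 := by
  rw [Finset.card_eq_sum_card_fiberwise
    (f := Prod.fst) (t := range n) (fun p hp => by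
      simp only [Finset.mem_coe, Finset.mem_filter, Finset.mem_product] at hp
      exact hp.1.1)]
  have hfib : ∀ i ∈ range n,
      ((((range n) ×ˢ (range n)).filter fun p => p.1 < p.2 ∧ p.1 + p.2 < n).filter
        fun p => p.1 = i).card = (n - i) - (i + 1) := by
    intro i _
    have : ((((range n) ×ˢ (range n)).filter fun p => p.1 < p.2 ∧ p.1 + p.2 < n).filter
        fun p => p.1 = i).card = (Finset.Ico (i + 1) (n - i)).card := by
      apply Finset.card_bij (i := fun p _ => p.2)
      · intro p hp
        simp only [Finset.mem_filter, Finset.mem_product, Finset.mem_range] at hp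
        simp only [Finset.mem_Ico]
        omega
      · intro p hp q hq hpq
        simp only [Finset.mem_filter, Finset.mem_product, Finset.mem_range] at hp hq
        exact Prod.ext (hp.2.trans hq.2.symm) hpq
      · intro b hb
        simp only [Finset.mem_Ico] at hb
        refine ⟨(i, b), ?_, rfl⟩
        simp only [Finset.mem_filter, Finset.mem_product, Finset.mem_range]
        refine ⟨?_, trivial⟩
        omega
    rw [this, Nat.card_Ico]
  rw [Finset.sum_congr rfl hfib]
  exact sumform n

lemma card_Tidx (n : ℕ) : Fintype.card (Tidx n) = n ^ 2 / 4 := by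
  rw [Fintype.card_subtype]
  rw [show ((Finset.univ : Finset (Fin n × Fin n)).filter
      fun p => p.1 < p.2 ∧ p.1.val + p.2.val < n).card
    = (((range n) ×ˢ (range n)).filter fun p => p.1 < p.2 ∧ p.1 + p.2 < n).card from ?_]
  · exact natcount n
  · apply Finset.card_bij (i := fun p _ => (p.1.val, p.2.val))
    · intro p hp
      simp only [Finset.mem_filter, Finset.mem_univ, true_and] at hp
      simp only [Finset.mem_filter, Finset.mem_product, Finset.mem_range]
      exact ⟨⟨p.1.isLt, p.2.isLt⟩, Fin.lt_def.mp hp.1, hp.2⟩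
    · intro p hp q hq hpq
      simp only [Prod.mk.injEq] at hpq
      exact Prod.ext (Fin.ext hpq.1) (Fin.ext hpq.2)
    · intro b hb
      simp only [Finset.mem_filter, Finset.mem_product, Finset.mem_range] at hb
      refine ⟨(⟨b.1, hb.1.1⟩, ⟨b.2, hb.1.2⟩), ?_, rfl⟩
      simp only [Finset.mem_filter, Finset.mem_univ, true_and]
      exact ⟨Fin.lt_def.mpr hb.2.1, hb.2.2⟩

end Count

end DASASMAux



open DASASMAux in
/-- The polytope of diagonally and antidiagonally symmetric ASMs is the
intersection of the ASM polytope with the corresponding symmetry subspace, and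
its dimension is `⌊n²/4⌋`. -/
theorem DASASM_polytope_description_and_dim (n : ℕ) (hn : 1 ≤ n) :
    (convexHull ℝ
        {X : Fin n → Fin n → ℝ |
          IsASM n X ∧ ∀ i j, X i j = X j i ∧ X i j = X j.rev i.rev}
      = convexHull ℝ {X : Fin n → Fin n → ℝ | IsASM n X}
        ∩ {X : Fin n → Fin n → ℝ | ∀ i j, X i j = X j i ∧ X i j = X j.rev i.rev}) ∧
    Module.finrank ℝ
        ↥(vectorSpan ℝ
          (convexHull ℝ
            {X : Fin n → Fin n → ℝ |
              IsASM n X ∧ ∀ i j, X i j = X j i ∧ X i j = X j.rev i.rev}))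
      = n ^ 2 / 4 := by
  constructor
  · exact part1 hn
  · have h1 : convexHull ℝ
        {X : Fin n → Fin n → ℝ |
          IsASM n X ∧ ∀ i j, X i j = X j i ∧ X i j = X j.rev i.rev} = Qset n :=
      hullS_eq_Q hn
    rw [h1, vspan_eq hn, finrank_W, card_Tidx]
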